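/- arXiv:0803.2522 — 3 statements merged into one kernel-verified Lean document; each statement's English description precedes it below -/
import Mathlib

section
/- Let G be a group acting on a vector space V, J the augmentation ideal of C[G], and suppose f ∈ V satisfies f·δ = 0 for all δ ∈ J^{s+1}. Let γ ∈ G with γ^e = 1 for some integer e ≥ 1. Then for any δ₁ ∈ J^m and δ₂ ∈ J^{s−m−1}, we have f·(δ₁(γ − 1)δ₂) = 0. -/
/-- The augmentation ideal of `ℂ[G]`. -/
noncomputable def augIdeal (G : Type*) [Group G] : Ideal (MonoidAlgebra ℂ G) :=
  RingHom.ker ((MonoidAlgebra.lift ℂ ℂ G (1 : G →* ℂ)) :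
    MonoidAlgebra ℂ G →ₐ[ℂ] ℂ).toRingHom

/-! Since `u ^ e = 1`, the sum `∑_{l < e} u ^ l (u - 1) = u ^ e - 1` vanishes. If the elements
`a (u ^ l - 1)(u - 1) b` all annihilate `f`, then every term `a u ^ l (u - 1) b` acts on `f` as
`a (u - 1) b` does, so `e • (a (u - 1) b) • f = 0`, and `e` can be cancelled. For
`a ∈ J ^ m`, `b ∈ J ^ n` and `u = γ`, these elements lie in `J ^ (m + n + 2) = J ^ (s + 1)`. -/

theorem Ideal.mul_mem_pow_add {R : Type*} [Semiring R] {I : Ideal R} [I.IsTwoSided]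
    {a b : ℕ} {u v : R} (hu : u ∈ I ^ a) (hv : v ∈ I ^ b) : u * v ∈ I ^ (a + b) :=
  (Ideal.IsTwoSided.pow_add (I := I) a b).symm ▸ Submodule.mul_mem_mul hu hv

theorem smul_mul_sub_one_mul_eq_zero_of_pow_eq_one {A M : Type*} [Ring A] [AddCommGroup M]
    [Module A M] {u a b : A} {e : ℕ} (hu : u ^ e = 1) (he : IsUnit (e : A)) {f : M}
    (h : ∀ l, (a * (u ^ l - 1) * (u - 1) * b) • f = 0) : (a * (u - 1) * b) • f = 0 := by
  have hterm : ∀ l, (a * (u ^ l * (u - 1)) * b) • f = (a * (u - 1) * b) • f := fun l => by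
    rw [show a * (u ^ l * (u - 1)) * b = a * (u ^ l - 1) * (u - 1) * b + a * (u - 1) * b by
      noncomm_ring, add_smul, h, zero_add]
  have hsum : ∑ l ∈ Finset.range e, a * (u ^ l * (u - 1)) * b = 0 := by
    rw [← Finset.sum_mul, ← Finset.mul_sum, ← Finset.sum_mul, geom_sum_mul, hu, sub_self,
      mul_zero, zero_mul]
  rw [← he.smul_eq_zero, Nat.cast_smul_eq_nsmul, ← Finset.card_range e, ← Finset.sum_const,
    ← Finset.sum_congr rfl fun l _ => hterm l, ← Finset.sum_smul, hsum, zero_smul]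

namespace augIdeal

variable {G : Type*} [Group G]

instance : (augIdeal G).IsTwoSided :=
  inferInstanceAs (RingHom.ker _).IsTwoSided

theorem of_sub_one_mem (g : G) : MonoidAlgebra.of ℂ G g - 1 ∈ augIdeal G := by
  simp [augIdeal, RingHom.mem_ker]

end augIdeal

/-- If `f` is annihilated by `J^{s+1}` and `γ ∈ G` is torsion (`γ^e = 1`, `e ≥ 1`),
then `f·(δ₁(γ − 1)δ₂) = 0` for all `δ₁ ∈ J^m`, `δ₂ ∈ J^{s−m−1}` (here `n = s−m−1`). -/
theorem higherOrder_elliptic_vanishing {G V : Type*} [Group G] [AddCommGroup V]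
    [Module (MonoidAlgebra ℂ G) V] (s m n : ℕ) (hmn : m + n + 1 = s)
    (f : V) (hf : ∀ δ ∈ augIdeal G ^ (s + 1), δ • f = 0)
    (γ : G) (e : ℕ) (he : 1 ≤ e) (hγ : γ ^ e = 1)
    (δ₁ δ₂ : MonoidAlgebra ℂ G) (hδ₁ : δ₁ ∈ augIdeal G ^ m) (hδ₂ : δ₂ ∈ augIdeal G ^ n) :
    (δ₁ * (MonoidAlgebra.of ℂ G γ - 1) * δ₂) • f = 0 := by
  have he_unit : IsUnit (e : MonoidAlgebra ℂ G) :=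
    map_natCast (algebraMap ℂ (MonoidAlgebra ℂ G)) e ▸
      (IsUnit.mk0 (e : ℂ) (Nat.cast_ne_zero.mpr (by omega))).map _
  refine smul_mul_sub_one_mul_eq_zero_of_pow_eq_one (by rw [← map_pow, hγ, map_one]) he_unit
    fun l => hf _ ?_
  have hmem_pow : δ₁ * (MonoidAlgebra.of ℂ G γ ^ l - 1) ∈ augIdeal G ^ (m + 1) := by
    rw [← map_pow]
    exact Submodule.mul_mem_mul hδ₁ (augIdeal.of_sub_one_mem _)
  have hmem_sub : δ₁ * (MonoidAlgebra.of ℂ G γ ^ l - 1) * (MonoidAlgebra.of ℂ G γ - 1) ∈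
      augIdeal G ^ (m + 1 + 1) :=
    Submodule.mul_mem_mul hmem_pow (augIdeal.of_sub_one_mem γ)
  have hmem := Ideal.mul_mem_pow_add hmem_sub hδ₂
  rwa [show m + 1 + 1 + n = s + 1 by omega] at hmem
end

section
/- Let w₁, …, w_s be smooth 1-forms on X and let α, β be composable paths (α(1) = β(0)). Then ∫_{αβ} w₁⋯w_s = ∫_α w₁⋯w_s + ∫_β w₁⋯w_s + Σ_{j=1}^{s−1} (∫_α w₁⋯w_j)(∫_β w_{j+1}⋯w_s). -/
open intervalIntegral

/-- Pullback integrand `f(t) = w(γ(t))(γ'(t))` of a 1-form `w` along a path `γ`. -/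
noncomputable def formPullback {E : Type*} [NormedAddCommGroup E] [NormedSpace ℝ E]
    (w : E → E →L[ℝ] ℝ) (γ : ℝ → E) (t : ℝ) : ℝ :=
  w (γ t) (deriv γ t)

/-- Auxiliary iterated integral: for a reversed list of forms `[w_r, …, w₁]`,
`itAux γ l t = ∫_{0 ≤ t₁ ≤ ⋯ ≤ t_r ≤ t} f₁(t₁)⋯f_r(t_r)`. -/
noncomputable def itAux {E : Type*} [NormedAddCommGroup E] [NormedSpace ℝ E]
    (γ : ℝ → E) : List (E → E →L[ℝ] ℝ) → ℝ → ℝ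
  | [], _ => 1
  | w :: ws, t => ∫ u in (0:ℝ)..t, formPullback w γ u * itAux γ ws u

/-- Chen's iterated line integral `∫_γ w₁ w₂ ⋯ w_r` of the 1-forms `ws = [w₁, …, w_r]`
along the path `γ : [0,1] → E`:
`∫⋯∫_{0 ≤ t₁ ≤ ⋯ ≤ t_r ≤ 1} f₁(t₁)⋯f_r(t_r) dt₁⋯dt_r` where `γ*(wᵢ) = fᵢ(t)dt`. -/
noncomputable def iterInt {E : Type*} [NormedAddCommGroup E] [NormedSpace ℝ E]
    (ws : List (E → E →L[ℝ] ℝ)) (γ : ℝ → E) : ℝ :=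
  itAux γ ws.reverse 1

/-- Concatenation of paths, `α` followed by `β`, on `[0,1]`. -/
noncomputable def pathConcat {E : Type*} (α β : ℝ → E) : ℝ → E :=
  fun t => if t ≤ 1 / 2 then α (2 * t) else β (2 * t - 1)

/-- Concatenation of a finite list of loops based at `x₀` (empty list: constant loop). -/
noncomputable def concatList {E : Type*} (x₀ : E) : List (ℝ → E) → (ℝ → E)
  | [] => fun _ => x₀
  | a :: l => pathConcat a (concatList x₀ l)

section chenAux
open MeasureTheory Set
variable {E : Type*} [NormedAddCommGroup E] [NormedSpace ℝ E]

lemma continuous_formPullback {w : E → E →L[ℝ] ℝ} {γ : ℝ → E}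
    (hw : ContDiff ℝ (⊤ : ℕ∞) w) (hγ : ContDiff ℝ (⊤ : ℕ∞) γ) : Continuous (formPullback w γ) :=
  (hw.continuous.comp hγ.continuous).clm_apply (hγ.continuous_deriv (by simp))

lemma continuous_itAux {γ : ℝ → E} (hγ : ContDiff ℝ (⊤ : ℕ∞) γ) :
    ∀ (l : List (E → E →L[ℝ] ℝ)), (∀ w ∈ l, ContDiff ℝ (⊤ : ℕ∞) w) → Continuous (itAux γ l)
  | [], _ => continuous_const
  | w :: l, h => by
    have hcont : Continuous fun u => formPullback w γ u * itAux γ l u :=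
      (continuous_formPullback (h w (by simp)) hγ).mul
        (continuous_itAux hγ l fun v hv => h v (by simp [hv]))
    simpa [itAux] using
      intervalIntegral.continuous_primitive (fun a b => hcont.intervalIntegrable a b) 0

lemma hasDerivAt_concat_left {α β : ℝ → E} (hα : ContDiff ℝ (⊤ : ℕ∞) α) {u : ℝ} (hu : u < 1/2) :
    HasDerivAt (pathConcat α β) ((2:ℝ) • deriv α (2*u)) u := by
  have h1 : HasDerivAt (fun t : ℝ => 2 * t) 2 u := by
    simpa using (hasDerivAt_id u).const_mul (2:ℝ)
  have h2 : HasDerivAt α (deriv α (2*u)) (2*u) :=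
    (hα.differentiable (by simp) (2*u)).hasDerivAt
  have h3 : HasDerivAt (fun t : ℝ => α (2*t)) ((2:ℝ) • deriv α (2*u)) u := h2.scomp u h1
  refine h3.congr_of_eventuallyEq ?_
  filter_upwards [Ioo_mem_nhds (show u - 1 < u by linarith) hu] with t ht
  show (if t ≤ 1/2 then α (2*t) else β (2*t-1)) = α (2*t)
  rw [if_pos (le_of_lt ht.2)]

lemma hasDerivAt_concat_right {α β : ℝ → E} (hβ : ContDiff ℝ (⊤ : ℕ∞) β) {u : ℝ} (hu : 1/2 < u) :
    HasDerivAt (pathConcat α β) ((2:ℝ) • deriv β (2*u - 1)) u := by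
  have h1 : HasDerivAt (fun t : ℝ => 2 * t - 1) 2 u := by
    simpa using ((hasDerivAt_id u).const_mul (2:ℝ)).sub_const 1
  have h2 : HasDerivAt β (deriv β (2*u - 1)) (2*u - 1) :=
    (hβ.differentiable (by simp) (2*u - 1)).hasDerivAt
  have h3 : HasDerivAt (fun t : ℝ => β (2*t - 1)) ((2:ℝ) • deriv β (2*u - 1)) u := h2.scomp u h1
  refine h3.congr_of_eventuallyEq ?_
  filter_upwards [Ioo_mem_nhds hu (show u < u + 1 by linarith)] with t ht
  show (if t ≤ 1/2 then α (2*t) else β (2*t-1)) = β (2*t-1)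
  rw [if_neg (not_le.mpr ht.1)]

lemma formPullback_concat_left {α β : ℝ → E} (hα : ContDiff ℝ (⊤ : ℕ∞) α)
    {w : E → E →L[ℝ] ℝ} {u : ℝ} (hu : u < 1/2) :
    formPullback w (pathConcat α β) u = 2 * formPullback w α (2*u) := by
  unfold formPullback
  rw [(hasDerivAt_concat_left (β := β) hα hu).deriv,
    show pathConcat α β u = α (2*u) from if_pos (le_of_lt hu)]
  simp

lemma formPullback_concat_right {α β : ℝ → E} (hβ : ContDiff ℝ (⊤ : ℕ∞) β)
    {w : E → E →L[ℝ] ℝ} {u : ℝ} (hu : 1/2 < u) :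
    formPullback w (pathConcat α β) u = 2 * formPullback w β (2*u - 1) := by
  unfold formPullback
  rw [(hasDerivAt_concat_right (α := α) hβ hu).deriv,
    show pathConcat α β u = β (2*u - 1) from if_neg (not_le.mpr hu)]
  simp

lemma ae_ne_half : ∀ᵐ u : ℝ, u ≠ (1/2 : ℝ) := by
  have : MeasureTheory.volume ({(1/2 : ℝ)} : Set ℝ) = 0 := Real.volume_singleton
  rw [MeasureTheory.ae_iff]
  simpa [Set.setOf_eq_eq_singleton] using this

lemma itAux_concat_left {α β : ℝ → E} (hα : ContDiff ℝ (⊤ : ℕ∞) α) (l : List (E → E →L[ℝ] ℝ)) :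
    (∀ w ∈ l, ContDiff ℝ (⊤ : ℕ∞) w) → ∀ t : ℝ, t ≤ 1/2 →
      itAux (pathConcat α β) l t = itAux α l (2*t) := by
  induction l with
  | nil => intro _ t _; rfl
  | cons w l ih =>
    intro h t ht
    have hw := h w List.mem_cons_self
    have hl : ∀ v ∈ l, ContDiff ℝ (⊤ : ℕ∞) v := fun v hv => h v (List.mem_cons_of_mem _ hv)
    have key : ∀ᵐ u : ℝ, u ∈ Set.uIoc (0:ℝ) t →
        formPullback w (pathConcat α β) u * itAux (pathConcat α β) l u
          = 2 * (formPullback w α (2*u) * itAux α l (2*u)) := by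
      filter_upwards [ae_ne_half] with u hne hu
      have hu2 : u < 1/2 := by
        have hle : u ≤ 1/2 := by
          rcases Set.mem_uIoc.mp hu with h' | h' <;> linarith [h'.1, h'.2]
        exact lt_of_le_of_ne hle hne
      rw [formPullback_concat_left hα hu2, ih hl u (le_of_lt hu2)]
      ring
    show (∫ u in (0:ℝ)..t, formPullback w (pathConcat α β) u * itAux (pathConcat α β) l u)
        = itAux α (w :: l) (2*t)
    rw [intervalIntegral.integral_congr_ae key]
    have hsub := intervalIntegral.smul_integral_comp_mul_left
      (f := fun v => formPullback w α v * itAux α l v) (a := 0) (b := t) 2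
    rw [intervalIntegral.integral_const_mul]
    show (2:ℝ) • (∫ u in (0:ℝ)..t, (fun v => formPullback w α v * itAux α l v) (2*u))
        = itAux α (w :: l) (2*t)
    rw [hsub, mul_zero]
    rfl

lemma itAux_concat_right {α β : ℝ → E} (hα : ContDiff ℝ (⊤ : ℕ∞) α) (hβ : ContDiff ℝ (⊤ : ℕ∞) β)
    (l : List (E → E →L[ℝ] ℝ)) :
    (∀ w ∈ l, ContDiff ℝ (⊤ : ℕ∞) w) → ∀ t : ℝ, 1/2 ≤ t →
      itAux (pathConcat α β) l t
        = ∑ j ∈ Finset.range (l.length + 1),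
            itAux β (l.take j) (2*t - 1) * itAux α (l.drop j) 1 := by
  induction l with
  | nil => intro _ t _; simp [itAux]
  | cons w l ih =>
    intro h t ht
    have hw := h w List.mem_cons_self
    have hl : ∀ v ∈ l, ContDiff ℝ (⊤ : ℕ∞) v := fun v hv => h v (List.mem_cons_of_mem _ hv)
    set G : ℝ → ℝ :=
      fun u => formPullback w (pathConcat α β) u * itAux (pathConcat α β) l u with hG
    have hg1cont : Continuous fun u : ℝ => 2 * (formPullback w α (2*u) * itAux α l (2*u)) := by
      have h2 : Continuous fun u : ℝ => 2*u := by continuity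
      exact continuous_const.mul (((continuous_formPullback hw hα).comp h2).mul
        ((continuous_itAux hα l hl).comp h2))
    have hg2cont : ∀ j, Continuous (fun u : ℝ =>
        2 * (formPullback w β (2*u-1) * itAux β (l.take j) (2*u-1)) * itAux α (l.drop j) 1) := by
      intro j
      have h2 : Continuous fun u : ℝ => 2*u - 1 := by continuity
      exact (continuous_const.mul (((continuous_formPullback hw hβ).comp h2).mul
        ((continuous_itAux hβ _ (fun v hv => hl v (List.mem_of_mem_take hv))).comp h2))).mul
        continuous_const
    have heq1 : ∀ u : ℝ, u ≠ 1/2 → u ∈ Set.uIoc (0:ℝ) (1/2) →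
        G u = 2 * (formPullback w α (2*u) * itAux α l (2*u)) := by
      intro u hne hu
      have hu2 : u < 1/2 := lt_of_le_of_ne
        (by rcases Set.mem_uIoc.mp hu with h' | h' <;> linarith [h'.1, h'.2]) hne
      rw [hG]; simp only
      rw [formPullback_concat_left hα hu2, itAux_concat_left hα l hl u (le_of_lt hu2)]
      ring
    have heq2 : ∀ u : ℝ, u ∈ Set.Ioc (1/2 : ℝ) t →
        G u = ∑ j ∈ Finset.range (l.length + 1),
          2 * (formPullback w β (2*u-1) * itAux β (l.take j) (2*u-1)) * itAux α (l.drop j) 1 := by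
      intro u hu
      rw [hG]; simp only
      rw [formPullback_concat_right hβ hu.1, ih hl u (le_of_lt hu.1), Finset.mul_sum]
      exact Finset.sum_congr rfl fun j _ => by ring
    have hII1 : IntervalIntegrable G MeasureTheory.volume 0 (1/2) := by
      refine (hg1cont.intervalIntegrable 0 (1/2)).congr_ae ?_
      refine ((ae_ne_half.filter_mono
        (MeasureTheory.ae_mono MeasureTheory.Measure.restrict_le_self)).mp
        ((MeasureTheory.ae_restrict_mem measurableSet_uIoc).mono fun u hu hne => ?_))
      exact (heq1 u hne hu).symm
    have hII2 : IntervalIntegrable G MeasureTheory.volume (1/2) t := by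
      refine ((continuous_finset_sum (Finset.range (l.length + 1))
        fun j _ => hg2cont j).intervalIntegrable (1/2) t).congr_ae ?_
      refine (MeasureTheory.ae_restrict_mem measurableSet_uIoc).mono fun u hu => ?_
      rw [Set.uIoc_of_le ht] at hu
      exact (heq2 u hu).symm
    have hsplit := intervalIntegral.integral_add_adjacent_intervals hII1 hII2
    have hfirst : (∫ u in (0:ℝ)..(1/2:ℝ), G u) = itAux α (w :: l) 1 := by
      have h0 : (∫ u in (0:ℝ)..(1/2:ℝ), G u) = itAux (pathConcat α β) (w :: l) (1/2) := rfl
      rw [h0, itAux_concat_left hα (w :: l) h (1/2) le_rfl]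
      norm_num
    have hsecond : (∫ u in (1/2:ℝ)..t, G u)
        = ∑ j ∈ Finset.range (l.length + 1),
            itAux β (w :: l.take j) (2*t - 1) * itAux α (l.drop j) 1 := by
      rw [intervalIntegral.integral_congr_ae (MeasureTheory.ae_of_all _
        (fun u hu => heq2 u (by rwa [Set.uIoc_of_le ht] at hu)))]
      rw [intervalIntegral.integral_finset_sum
        (fun j _ => (hg2cont j).intervalIntegrable (1/2) t)]
      refine Finset.sum_congr rfl fun j _ => ?_
      rw [intervalIntegral.integral_mul_const, intervalIntegral.integral_const_mul]
      congr 1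
      have hsub := intervalIntegral.smul_integral_comp_mul_add
        (f := fun v => formPullback w β v * itAux β (l.take j) v) (a := 1/2) (b := t) 2 (-1)
      have harg : ∀ u : ℝ, 2*u - 1 = 2*u + (-1) := fun u => by ring
      calc 2 * ∫ u in (1/2 : ℝ)..t, formPullback w β (2*u-1) * itAux β (l.take j) (2*u-1)
          = (2:ℝ) • ∫ u in (1/2 : ℝ)..t,
              (fun v => formPullback w β v * itAux β (l.take j) v) (2*u + (-1)) := by
            rw [smul_eq_mul]
            have heq : (∫ u in (1/2 : ℝ)..t, formPullback w β (2*u-1) * itAux β (l.take j) (2*u-1))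
                = ∫ u in (1/2 : ℝ)..t,
                    (fun v => formPullback w β v * itAux β (l.take j) v) (2*u + (-1)) :=
              intervalIntegral.integral_congr fun u _ => by simp only; rw [harg u]
            rw [heq]
        _ = ∫ v in (2*(1/2 : ℝ) + (-1))..(2*t + (-1)),
              formPullback w β v * itAux β (l.take j) v := hsub
        _ = itAux β (w :: l.take j) (2*t - 1) := by norm_num [itAux]; ring_nf
    show (∫ u in (0:ℝ)..t, G u)
        = ∑ j ∈ Finset.range ((w :: l).length + 1),
            itAux β ((w :: l).take j) (2*t - 1) * itAux α ((w :: l).drop j) 1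
    rw [← hsplit, hfirst, hsecond]
    rw [show (w :: l).length + 1 = (l.length + 1) + 1 from rfl]
    conv_rhs => rw [Finset.sum_range_succ']
    simp only [List.take_succ_cons, List.drop_succ_cons, List.take_zero, List.drop_zero]
    have hnil : itAux β ([] : List (E → E →L[ℝ] ℝ)) (2*t - 1) = 1 := rfl
    rw [hnil, one_mul]
    exact add_comm _ _

end chenAux

/-- (Chen/Hain comultiplication, Prop. 2.9.) For composable paths `α, β`
(`α(1) = β(0)`) and smooth 1-forms `w₁, …, w_s`:
`∫_{αβ} w₁⋯w_s = Σ_{j=0}^{s} (∫_α w₁⋯w_j)(∫_β w_{j+1}⋯w_s)`, where the `j = 0` and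
`j = s` terms are `∫_β w₁⋯w_s` and `∫_α w₁⋯w_s` (empty iterated integral `= 1`). -/
theorem iterInt_concat {E : Type*} [NormedAddCommGroup E] [NormedSpace ℝ E]
    (ws : List (E → E →L[ℝ] ℝ)) (hws : ∀ w ∈ ws, ContDiff ℝ (⊤ : ℕ∞) w)
    (α β : ℝ → E) (hα : ContDiff ℝ (⊤ : ℕ∞) α) (hβ : ContDiff ℝ (⊤ : ℕ∞) β) (hcomp : α 1 = β 0) :
    iterInt ws (pathConcat α β)
      = ∑ j ∈ Finset.range (ws.length + 1),
          iterInt (ws.take j) α * iterInt (ws.drop j) β := by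
  have hwsrev : ∀ w ∈ ws.reverse, ContDiff ℝ (⊤ : ℕ∞) w := fun w hw => hws w (List.mem_reverse.mp hw)
  have h := itAux_concat_right hα hβ ws.reverse hwsrev 1 (by norm_num)
  unfold iterInt
  rw [h, List.length_reverse, ← Finset.sum_range_reflect]
  refine Finset.sum_congr rfl fun j hj => ?_
  have hj' : j ≤ ws.length := Nat.lt_succ_iff.mp (Finset.mem_range.mp hj)
  rw [show ws.length + 1 - 1 - j = ws.length - j from by omega,
    List.take_reverse, List.drop_reverse,
    show ws.length - (ws.length - j) = j from by omega]
  norm_num [mul_comm]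
end

section
/- Let G be a group acting on functions and let M^s denote order-s forms. Suppose Λ_L ∈ M^{s+1} (for L ranging over s-tuples from {1,…,n}) satisfy Λ_L·((γ_{i₁}−1)⋯(γ_{i_s}−1)) = δ_I^L (Kronecker delta, as constant functions) for all s-tuples I, and that constants are G-invariant. Then for any family (f_L)_L of G-invariant functions (f_L ∈ M^1), the function F = Σ_L f_L Λ_L satisfies F·((γ_{i₁}−1)⋯(γ_{i_s}−1)) = f_I for every s-tuple I, and F ∈ M^{s+1} for the weight-k action when the f_L have weight k. -/
/-- The weight-`k` action of `ℂ[G]` on functions `H → ℂ` associated with an automorphy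
factor `j : G → H → ℂ`, extending `(F|ₖγ)(z) = j(γ,z)·F(γ·z)` by linearity.
(The weight-0 action is the case `j ≡ 1`.) -/
noncomputable def actWt {G H : Type*} [Group G] [MulAction G H] (j : G → H → ℂ)
    (δ : MonoidAlgebra ℂ G) (F : H → ℂ) : H → ℂ :=
  fun z => δ.coeff.sum fun γ c => c * (j γ z * F (γ • z))

/-!
If `f` is invariant under the weight-`k` action, then `(f Λ)|ₖγ = f · (Λ|₀γ)` for every
`γ ∈ G`, hence `(f Λ)|ₖδ = f · (Λ|₀δ)` for every `δ ∈ ℂ[G]`. Applied to `F = Σ_L f_L Λ_L`,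
the weight-`k` action of `δ` on `F` is read off from the weight-`0` action of `δ` on the
`Λ_L`, which is the Kronecker delta on the products `(γ_{i₁}−1)⋯(γ_{i_s}−1)` and zero
on `J^{s+1}`.
-/

section ActWt

variable {G H : Type*} [Group G] [MulAction G H]

theorem actWt_finset_sum (j : G → H → ℂ) (δ : MonoidAlgebra ℂ G) {ι : Type*}
    (t : Finset ι) (F : ι → H → ℂ) (z : H) :
    actWt j δ (fun w => ∑ L ∈ t, F L w) z = ∑ L ∈ t, actWt j δ (F L) z := by
  simp only [actWt, Finsupp.sum, Finset.mul_sum]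
  exact Finset.sum_comm

theorem actWt_mul_of_invariant (j : G → H → ℂ) (δ : MonoidAlgebra ℂ G) {f : H → ℂ}
    (hf : ∀ (g : G) (z : H), j g z * f (g • z) = f z) (Λ : H → ℂ) (z : H) :
    actWt j δ (fun w => f w * Λ w) z = f z * actWt (fun _ _ => 1) δ Λ z := by
  simp only [actWt, Finsupp.sum, Finset.mul_sum]
  refine Finset.sum_congr rfl fun g _ => ?_
  rw [← hf g z]
  ring

theorem actWt_sum_mul_of_invariant (j : G → H → ℂ) (δ : MonoidAlgebra ℂ G) {ι : Type*}
    (t : Finset ι) {f : ι → H → ℂ} (hf : ∀ L (g : G) (z : H), j g z * f L (g • z) = f L z)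
    (Λ : ι → H → ℂ) (z : H) :
    actWt j δ (fun w => ∑ L ∈ t, f L w * Λ L w) z
      = ∑ L ∈ t, f L z * actWt (fun _ _ => 1) δ (Λ L) z := by
  rw [actWt_finset_sum]
  exact Finset.sum_congr rfl fun L _ => actWt_mul_of_invariant j δ (hf L) (Λ L) z

end ActWt

theorem surjectivity_step_general {G H : Type*} [Group G] [MulAction G H]
    (j : G → H → ℂ)
    (n s : ℕ) (γ : Fin n → G) (Λ f : (Fin s → Fin n) → H → ℂ)
    (hΛ : ∀ (I L : Fin s → Fin n) (z : H),
      actWt (fun _ _ => 1)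
        ((List.ofFn fun k =>
          (MonoidAlgebra.of ℂ G (γ (I k)) - 1 : MonoidAlgebra ℂ G)).prod) (Λ L) z
        = if I = L then 1 else 0)
    (hΛhigh : ∀ L, ∀ δ ∈ augIdeal G ^ (s + 1), actWt (fun _ _ => 1) δ (Λ L) = 0)
    (hfInv : ∀ (L : Fin s → Fin n) (g : G) (z : H), j g z * f L (g • z) = f L z) :
    let F : H → ℂ := fun z => ∑ L : Fin s → Fin n, f L z * Λ L z
    (∀ (I : Fin s → Fin n) (z : H),
      actWt j ((List.ofFn fun k =>
        (MonoidAlgebra.of ℂ G (γ (I k)) - 1 : MonoidAlgebra ℂ G)).prod) F z = f I z) ∧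
    (∀ δ ∈ augIdeal G ^ (s + 1), actWt j δ F = 0) := by
  intro F
  have hF : ∀ δ z, actWt j δ F z = ∑ L, f L z * actWt (fun _ _ => 1) δ (Λ L) z :=
    fun δ z => actWt_sum_mul_of_invariant j δ Finset.univ hfInv Λ z
  refine ⟨fun I z => ?_, fun δ hδ => funext fun z => ?_⟩
  · simp only [hF, hΛ, mul_ite, mul_one, mul_zero, Finset.sum_ite_eq, Finset.mem_univ,
      if_true]
  · simp only [hF, hΛhigh _ δ hδ, Pi.zero_apply, mul_zero, Finset.sum_const_zero]

/-- Surjectivity step of the classification theorem: suppose `Λ_L ∈ M̃^{s+1}` (weight 0)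
satisfy `Λ_L·((γ_{i₁}−1)⋯(γ_{i_s}−1)) = δ_I^L` (Kronecker delta, as constants) and
`Λ_L·J^{s+1} = 0`. Then for any family `f_L` of functions invariant under the weight-`k`
action, `F = Σ_L f_L Λ_L` satisfies `F|ₖ((γ_{i₁}−1)⋯(γ_{i_s}−1)) = f_I` for every
`s`-tuple `I`, and `F·J^{s+1} = 0`, i.e. `F ∈ M^{s+1}` for the weight-`k` action. -/
theorem surjectivity_step {G H : Type*} [Group G] [MulAction G H]
    (j : G → H → ℂ) (hj : ∀ (g₁ g₂ : G) (z : H), j (g₁ * g₂) z = j g₁ (g₂ • z) * j g₂ z)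
    (n s : ℕ) (γ : Fin n → G) (Λ f : (Fin s → Fin n) → H → ℂ)
    (hΛ : ∀ (I L : Fin s → Fin n) (z : H),
      actWt (fun _ _ => 1)
        ((List.ofFn fun k =>
          (MonoidAlgebra.of ℂ G (γ (I k)) - 1 : MonoidAlgebra ℂ G)).prod) (Λ L) z
        = if I = L then 1 else 0)
    (hΛhigh : ∀ L, ∀ δ ∈ augIdeal G ^ (s + 1), actWt (fun _ _ => 1) δ (Λ L) = 0)
    (hfInv : ∀ (L : Fin s → Fin n) (g : G) (z : H), j g z * f L (g • z) = f L z) :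
    let F : H → ℂ := fun z => ∑ L : Fin s → Fin n, f L z * Λ L z
    (∀ (I : Fin s → Fin n) (z : H),
      actWt j ((List.ofFn fun k =>
        (MonoidAlgebra.of ℂ G (γ (I k)) - 1 : MonoidAlgebra ℂ G)).prod) F z = f I z) ∧
    (∀ δ ∈ augIdeal G ^ (s + 1), actWt j δ F = 0) :=
  surjectivity_step_general j n s γ Λ f hΛ hΛhigh hfInv
end
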